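/- arXiv:1507.01779 — 5 statements merged into one kernel-verified Lean document; each statement's English description precedes it below -/
import Mathlib

section
/- Let X be a compact Hausdorff space, let A be a natural uniform algebra on X, and let x ∈ X. Suppose x has a non-trivial Jensen measure μ (a Jensen measure for x that is not the point mass δ_x), and let F be the closed support of μ. Then for every y ∈ F \ {x} we have J_y ⊆ M_x. Consequently, x is not a point of continuity for A, and no point of F \ {x} is an R-point for A. -/
/-! If `f ∈ A` vanishes on an open set `U` with `μ U > 0` but `f x ≠ 0`, Jensen's inequality for
`eⁿ • f` reads `n + log |f x| ≤ μ(Uᶜ) (n + log⁺ ‖f‖)`, which fails for large `n` because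
`μ(Uᶜ) < 1`. Every neighbourhood of a point `y` of the support has positive measure, so
`J_y ⊆ M_x`. Since `μ` is regular it is carried by its support, and as `μ ≠ δ_x` the support
contains a point other than `x`. -/

open MeasureTheory Set

noncomputable section

variable {X : Type*} [TopologicalSpace X]

/-- The ideal `M_x` of functions in the subalgebra `A` of `C(X)` vanishing at `x`. -/
def MsetA (A : Subalgebra ℂ C(X, ℂ)) (x : X) : Set C(X, ℂ) :=
  {f | f ∈ A ∧ f x = 0}

/-- The ideal `J_x` of functions in `A` vanishing on a neighbourhood of `x`. -/
def JsetA (A : Subalgebra ℂ C(X, ℂ)) (x : X) : Set C(X, ℂ) :=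
  {f | f ∈ A ∧ ∃ U : Set X, IsOpen U ∧ x ∈ U ∧ ∀ z ∈ U, f z = 0}

/-- `x` is a point of continuity for `A`: for every `y ∈ X \ {x}`, `J_y ⊄ M_x`. -/
def PoCA (A : Subalgebra ℂ C(X, ℂ)) (x : X) : Prop :=
  ∀ y : X, y ≠ x → ¬ (JsetA A y ⊆ MsetA A x)

/-- `x` is an R-point for `A`: for every `y ∈ X \ {x}`, `J_x ⊄ M_y`. -/
def RPtA (A : Subalgebra ℂ C(X, ℂ)) (x : X) : Prop :=
  ∀ y : X, y ≠ x → ¬ (JsetA A x ⊆ MsetA A y)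

/-- `A` is a natural uniform algebra on the compact Hausdorff space `X`: a closed,
point-separating subalgebra of `C(X)` (containing the constants, being a subalgebra)
all of whose characters are evaluations at points of `X`. -/
def IsNaturalUniformAlgebra (A : Subalgebra ℂ C(X, ℂ)) : Prop :=
  IsClosed (A : Set C(X, ℂ)) ∧
    (∀ a b : X, a ≠ b → ∃ f ∈ A, f a ≠ f b) ∧
    ∀ φ : A →ₐ[ℂ] ℂ, ∃ x : X, ∀ f : A, φ f = (f : C(X, ℂ)) x

variable [MeasurableSpace X]

/-- A Jensen measure for `x` with respect to `A`: a regular Borel probability measure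
`μ` on `X` with `f(x) = ∫ f dμ` for all `f ∈ A`, satisfying the Jensen inequality
`log|f(x)| ≤ ∫ log|f| dμ` (with `log 0 = -∞`).  When `f(x) = 0` the inequality is
vacuous; when `f(x) ≠ 0` the extended-real inequality is encoded by the equivalent
family of truncated inequalities with integrands `max (log|f|) c`, `c ∈ ℝ`. -/
def JensenMeasureA (A : Subalgebra ℂ C(X, ℂ)) (x : X) (μ : Measure X) : Prop :=
  IsProbabilityMeasure μ ∧ μ.Regular ∧
    (∀ f ∈ A, f x = ∫ z, f z ∂μ) ∧
    ∀ f ∈ A, f x ≠ 0 →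
      ∀ c : ℝ, Real.log ‖f x‖ ≤ ∫ z, max (Real.log ‖f z‖) c ∂μ

/-- The closed support of a measure: the set of points all of whose open neighbourhoods
have nonzero measure. -/
def measSupport (μ : Measure X) : Set X :=
  {y | ∀ U : Set X, IsOpen U → y ∈ U → μ U ≠ 0}

open Filter Real

lemma exists_nonneg_mul_add_lt {a : ℝ} (ha : a < 1) (L M : ℝ) :
    ∃ n : ℝ, 0 ≤ n ∧ a * (n + M) < n + L := by
  have hlin : Tendsto (fun n => (1 - a) * n + (L - a * M)) atTop atTop :=
    tendsto_atTop_add_const_right _ _ (tendsto_id.const_mul_atTop (by linarith))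
  obtain ⟨n, hn0, hn⟩ := ((eventually_ge_atTop 0).and (hlin.eventually_gt_atTop 0)).exists
  exact ⟨n, hn0, by linarith⟩

namespace MeasureTheory.Measure

lemma eq_dirac_of_ae_eq {α : Type*} [MeasurableSpace α] {μ : Measure α} [IsProbabilityMeasure μ]
    {a : α} (h : ∀ᵐ z ∂μ, z = a) : μ = dirac a := by
  ext s hs
  rw [dirac_apply' a hs]
  by_cases ha : a ∈ s
  · rw [indicator_of_mem ha, Pi.one_apply, ← measure_univ (μ := μ)]
    exact (ae_iff_measure_eq (p := (· ∈ s)) hs.nullMeasurableSet).mp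
      (h.mono fun z hz => hz ▸ ha)
  · rw [indicator_of_notMem ha, measure_eq_zero_iff_ae_notMem]
    exact h.mono fun z hz => hz ▸ ha

variable {μ : Measure X} {x : X}

lemma measSupport_eq_support : measSupport μ = μ.support := by
  simp only [support_eq_forall_isOpen, measSupport, pos_iff_ne_zero]
  exact Set.ext fun _ => forall_congr' fun _ => imp.swap

lemma exists_mem_measSupport_ne_of_ne_dirac [IsProbabilityMeasure μ] [μ.Regular]
    (hμ : μ ≠ dirac x) : ∃ y ∈ measSupport μ, y ≠ x := by
  by_contra! h
  refine hμ (eq_dirac_of_ae_eq ?_)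
  have hsupp : measSupport μ ∈ ae μ := by
    rw [measSupport_eq_support]
    exact support_mem_ae_of_regular
  filter_upwards [hsupp] with z hz
  exact h z hz

end MeasureTheory.Measure

namespace JensenMeasureA

variable {A : Subalgebra ℂ C(X, ℂ)} {x : X} {μ : Measure X}

lemma add_log_norm_le [CompactSpace X] (hμ : JensenMeasureA A x μ) {f : C(X, ℂ)} (hf : f ∈ A)
    (hfx : f x ≠ 0) {U : Set X} (hU : MeasurableSet U) (hfU : EqOn f 0 U) {n : ℝ}
    (hn : 0 ≤ n) : n + log ‖f x‖ ≤ μ.real Uᶜ * (n + log⁺ ‖f‖) := by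
  have := hμ.1
  set g : C(X, ℂ) := (exp n : ℂ) • f
  have hg : ∀ z, ‖g z‖ = exp n * ‖f z‖ := fun z => by simp [g]
  have hbound : ∀ z, max (log ‖g z‖) 0 ≤ Uᶜ.indicator (fun _ => n + log⁺ ‖f‖) z := by
    intro z
    by_cases hz : z ∈ U
    · simp [g, hfU hz, hz]
    · rw [indicator_of_mem hz, max_comm, ← posLog_apply, hg]
      calc log⁺ (exp n * ‖f z‖) ≤ log⁺ (exp n) + log⁺ ‖f z‖ := posLog_mul
        _ ≤ n + log⁺ ‖f‖ := by
          rw [posLog_eq_log (by simpa [abs_of_pos (exp_pos n)] using one_le_exp hn), log_exp]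
          gcongr
          exact f.norm_coe_le_norm z
  calc n + log ‖f x‖ = log ‖g x‖ := by
        rw [hg, log_mul (exp_pos n).ne' (norm_ne_zero_iff.mpr hfx), log_exp]
    _ ≤ ∫ z, max (log ‖g z‖) 0 ∂μ :=
        hμ.2.2.2 g (A.smul_mem hf _) (by simpa [g] using hfx) 0
    _ ≤ ∫ z, Uᶜ.indicator (fun _ => n + log⁺ ‖f‖) z ∂μ :=
        integral_mono_of_nonneg (ae_of_all _ fun _ => le_max_right _ _)
          ((integrable_const _).indicator hU.compl) (ae_of_all _ hbound)
    _ = μ.real Uᶜ * (n + log⁺ ‖f‖) := by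
        rw [integral_indicator_const _ hU.compl, smul_eq_mul]

lemma apply_eq_zero_of_eqOn_zero [CompactSpace X] (hμ : JensenMeasureA A x μ) {f : C(X, ℂ)}
    (hf : f ∈ A) {U : Set X} (hU : MeasurableSet U) (hUμ : μ U ≠ 0) (hfU : EqOn f 0 U) :
    f x = 0 := by
  have := hμ.1
  by_contra hfx
  have hUc : μ.real Uᶜ < 1 := by
    rw [probReal_compl_eq_one_sub hU, sub_lt_self_iff]
    exact ENNReal.toReal_pos hUμ (measure_ne_top μ U)
  obtain ⟨n, hn, hlt⟩ := exists_nonneg_mul_add_lt hUc (log ‖f x‖) (log⁺ ‖f‖)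
  exact hlt.not_ge (hμ.add_log_norm_le hf hfx hU hfU hn)

lemma jsetA_subset_msetA [CompactSpace X] [OpensMeasurableSpace X]
    (hμ : JensenMeasureA A x μ) {y : X} (hy : y ∈ measSupport μ) : JsetA A y ⊆ MsetA A x := by
  rintro f ⟨hf, U, hUo, hyU, hfU⟩
  exact ⟨hf, hμ.apply_eq_zero_of_eqOn_zero hf hUo.measurableSet (hy U hUo hyU) hfU⟩

end JensenMeasureA

theorem jensen_measure_support_general (X : Type*) [TopologicalSpace X] [CompactSpace X]
    [MeasurableSpace X] [BorelSpace X]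
    (A : Subalgebra ℂ C(X, ℂ))
    (x : X) (μ : Measure X) (hμ : JensenMeasureA A x μ) (hnt : μ ≠ Measure.dirac x) :
    (∀ y ∈ measSupport μ, y ≠ x → JsetA A y ⊆ MsetA A x) ∧
      ¬ PoCA A x ∧
      (∀ y ∈ measSupport μ, y ≠ x → ¬ RPtA A y) := by
  have := hμ.1
  have := hμ.2.1
  have hJ : ∀ y ∈ measSupport μ, JsetA A y ⊆ MsetA A x := fun _ => hμ.jsetA_subset_msetA
  obtain ⟨y, hy, hyx⟩ := Measure.exists_mem_measSupport_ne_of_ne_dirac hnt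
  exact ⟨fun y hy _ => hJ y hy, fun hpoc => hpoc y hyx (hJ y hy),
    fun y hy hyx hrpt => hrpt x hyx.symm (hJ y hy)⟩

/-- Lemma 2.1 (paper, Lemma `Jensen_measures`): if `x` has a non-trivial Jensen measure
`μ` with closed support `F`, then `J_y ⊆ M_x` for all `y ∈ F \ {x}`; hence `x` is not a
point of continuity and no point of `F \ {x}` is an R-point. -/
theorem jensen_measure_support (X : Type*) [TopologicalSpace X] [CompactSpace X]
    [T2Space X] [MeasurableSpace X] [BorelSpace X]
    (A : Subalgebra ℂ C(X, ℂ)) (hA : IsNaturalUniformAlgebra A)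
    (x : X) (μ : Measure X) (hμ : JensenMeasureA A x μ) (hnt : μ ≠ Measure.dirac x) :
    (∀ y ∈ measSupport μ, y ≠ x → JsetA A y ⊆ MsetA A x) ∧
      ¬ PoCA A x ∧
      (∀ y ∈ measSupport μ, y ≠ x → ¬ RPtA A y) :=
  jensen_measure_support_general X A x μ hμ hnt

end
end

section
/- Let X be a compact Hausdorff space, let A be a natural uniform algebra on X, and let x ∈ X. If x is a point of continuity for A, then the only Jensen measure for x with respect to A is the point mass δ_x. -/
open MeasureTheory Set

noncomputable section

variable {X : Type*} [TopologicalSpace X]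

variable [MeasurableSpace X]

lemma null_nbhd {X : Type*} [TopologicalSpace X] [CompactSpace X] [MeasurableSpace X]
    [BorelSpace X] (A : Subalgebra ℂ C(X, ℂ)) (x : X) (μ : Measure X)
    [IsProbabilityMeasure μ]
    (hjen : ∀ f ∈ A, f x ≠ 0 →
      ∀ c : ℝ, Real.log (‖f x‖) ≤ ∫ z, max (Real.log (‖f z‖)) c ∂μ)
    (f : C(X, ℂ)) (hfA : f ∈ A) (U : Set X) (hU : IsOpen U)
    (hfU : ∀ z ∈ U, f z = 0) (hfx : f x ≠ 0) : μ U = 0 := by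
  by_contra hμU
  set a : ℝ := (μ U).toReal with ha_def
  have ha : 0 < a := ENNReal.toReal_pos hμU (measure_ne_top μ U)
  have ha1 : a ≤ 1 := by
    have := prob_le_one (μ := μ) (s := U)
    simpa [ha_def] using ENNReal.toReal_mono (by norm_num) this
  have hfxpos : 0 < ‖f x‖ := norm_pos_iff.mpr hfx
  set K : ℝ := ‖f‖ / ‖f x‖ with hK_def
  have hK1 : 1 ≤ K := by
    rw [hK_def, le_div_iff₀ hfxpos, one_mul]
    simpa using f.norm_coe_le_norm x
  have hKpos : 0 < K := lt_of_lt_of_le one_pos hK1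
  have hlogK : 0 ≤ Real.log K := Real.log_nonneg hK1
  set t : ℝ := Real.log K / a + 1 with ht_def
  have ht0 : 0 < t := by positivity
  set r : ℝ := Real.exp t / ‖f x‖ with hr_def
  have hr : 0 < r := by positivity
  set g : C(X, ℂ) := (r : ℂ) • f with hg_def
  have hgA : g ∈ A := A.smul_mem hfA _
  have habs : ∀ z, ‖g z‖ = r * ‖f z‖ := by
    intro z
    simp [hg_def, norm_smul, Complex.norm_real, abs_of_pos hr]
  have hgx : ‖g x‖ = Real.exp t := by
    rw [habs, hr_def, div_mul_cancel₀ _ hfxpos.ne']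
  have hgxne : g x ≠ 0 := by
    intro h
    rw [h] at hgx
    simp at hgx
    exact (Real.exp_pos t).ne' hgx.symm
  set B : ℝ := t + Real.log K with hB_def
  have hBnn : 0 ≤ B := by positivity
  have hbound : ∀ z, max (Real.log (‖g z‖)) 0 ≤ Uᶜ.indicator (fun _ => B) z := by
    intro z
    by_cases hz : z ∈ U
    · have : f z = 0 := hfU z hz
      simp [indicator, hz, habs, this]
    · rw [Set.indicator_of_mem (show z ∈ Uᶜ from hz)]
      refine max_le ?_ hBnn
      have hle : ‖g z‖ ≤ Real.exp B := by
        rw [habs, hB_def, Real.exp_add, Real.exp_log hKpos, hr_def]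
        have h1 : ‖f z‖ ≤ ‖f‖ := by
          simpa using f.norm_coe_le_norm z
        calc Real.exp t / ‖f x‖ * ‖f z‖
            ≤ Real.exp t / ‖f x‖ * ‖f‖ := by
              exact mul_le_mul_of_nonneg_left h1 (by positivity)
          _ = Real.exp t * K := by rw [hK_def]; ring
      rcases eq_or_lt_of_le (norm_nonneg (g z)) with h0 | h0
      · rw [← h0]; simpa using hBnn
      · calc Real.log (‖g z‖) ≤ Real.log (Real.exp B) := Real.log_le_log h0 hle
          _ = B := Real.log_exp B
  have hUc : MeasurableSet Uᶜ := hU.measurableSet.compl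
  have hφint : Integrable (Uᶜ.indicator (fun _ => B)) μ :=
    (integrable_const B).indicator hUc
  have hint : ∫ z, max (Real.log (‖g z‖)) 0 ∂μ ≤ B * (1 - a) := by
    have h1 : ∫ z, max (Real.log (‖g z‖)) 0 ∂μ
        ≤ ∫ z, Uᶜ.indicator (fun _ => B) z ∂μ :=
      integral_mono_of_nonneg (ae_of_all _ fun z => le_max_right _ 0) hφint
        (ae_of_all _ hbound)
    have h2 : ∫ z, Uᶜ.indicator (fun _ => B) z ∂μ = (μ Uᶜ).toReal * B := by
      rw [integral_indicator_const B hUc]; simp [mul_comm, Measure.real]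
    have h3 : (μ Uᶜ).toReal = 1 - a := by
      rw [prob_compl_eq_one_sub hU.measurableSet, ha_def,
        ENNReal.toReal_sub_of_le (prob_le_one) (by norm_num)]
      simp
    rw [h2, h3] at h1
    linarith [h1]
  have hjg := hjen g hgA hgxne 0
  rw [hgx, Real.log_exp] at hjg
  have hfin : t ≤ B * (1 - a) := le_trans hjg hint
  have hta : t * a = Real.log K + a := by
    rw [ht_def]; field_simp
  rw [hB_def] at hfin
  nlinarith [mul_nonneg hlogK ha.le]

/-- If `x` is a point of continuity for a natural uniform algebra `A` on a compact
Hausdorff space `X`, then the only Jensen measure for `x` is the point mass at `x`. -/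
theorem point_of_continuity_trivial_jensen (X : Type*) [TopologicalSpace X]
    [CompactSpace X] [T2Space X] [MeasurableSpace X] [BorelSpace X]
    (A : Subalgebra ℂ C(X, ℂ)) (hA : IsNaturalUniformAlgebra A)
    (x : X) (hx : PoCA A x) :
    ∀ μ : Measure X, JensenMeasureA A x μ → μ = Measure.dirac x := by
  intro μ hμ
  obtain ⟨hprob, hreg, hrep, hjen⟩ := hμ
  -- every y ≠ x has a null open neighbourhood
  have key : ∀ y : X, y ≠ x → ∃ U : Set X, IsOpen U ∧ y ∈ U ∧ μ U = 0 := by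
    intro y hy
    obtain ⟨f, hfJ, hfM⟩ := Set.not_subset.1 (hx y hy)
    obtain ⟨hfA, U, hUopen, hyU, hfU⟩ := hfJ
    have hfx : f x ≠ 0 := fun h => hfM ⟨hfA, h⟩
    exact ⟨U, hUopen, hyU, null_nbhd A x μ hjen f hfA U hUopen hfU hfx⟩
  -- μ ({x}ᶜ) = 0
  have hxc : μ ({x}ᶜ) = 0 := by
    by_contra h
    have hpos : 0 < μ ({x}ᶜ) := pos_iff_ne_zero.2 h
    haveI := hreg
    obtain ⟨K, hKsub, hKcomp, hKpos⟩ :=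
      (isOpen_compl_singleton (x := x)).exists_lt_isCompact hpos
    -- cover K by null open sets
    choose V hVopen hVmem hVnull using fun (y : K) =>
      key y.1 (by have := hKsub y.2; simpa using this)
    obtain ⟨s, hs⟩ := hKcomp.elim_finite_subcover V hVopen (fun z hz => mem_iUnion.2 ⟨⟨z, hz⟩, hVmem _⟩)
    have : μ K ≤ 0 := by
      calc μ K ≤ μ (⋃ y ∈ s, V y) := measure_mono hs
        _ ≤ ∑ y ∈ s, μ (V y) := measure_biUnion_finset_le s V
        _ = 0 := by simp [hVnull]
    exact absurd (le_antisymm this (by simp)) (by simpa using hKpos.ne')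
  have hx1 : μ {x} = 1 := by
    have := measure_add_measure_compl (μ := μ) (measurableSet_singleton x)
    rw [hxc, add_zero, measure_univ] at this
    exact this
  ext s hs
  rw [Measure.dirac_apply' x hs]
  by_cases hxs : x ∈ s
  · rw [indicator_of_mem hxs]
    refine le_antisymm prob_le_one ?_
    calc (1 : ENNReal) = μ {x} := hx1.symm
      _ ≤ μ s := measure_mono (singleton_subset_iff.2 hxs)
  · rw [indicator_of_notMem hxs]
    have : s ⊆ {x}ᶜ := fun z hz => by
      simp only [mem_compl_iff, mem_singleton_iff]
      rintro rfl; exact hxs hz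
    exact le_antisymm (hxc ▸ measure_mono this) (by simp)

end
end

section
/- Let X be a compact plane set, let F be a nonempty closed subset of X, and let x ∈ F. Suppose that no bounded connected component of ℂ \ F is contained in X, and that there exists a non-trivial representing measure μ for x with respect to R(X) whose closed support is contained in F. Then μ (regarded as a measure on F) is also a non-trivial representing measure for x与 respect to R(F), and R(F) ≠ C(F). -/
/-!
Off `F` the Cauchy transform `w ↦ ∫ g(z) (z - w)⁻¹ dμ` of an integrable `g` is holomorphic.
Poles of a rational function are moved one at a time: if `g` is a rational function for which
`μ` already represents `x`, the defect `w ↦ ∫ g(z) (z - w)⁻¹ dμ - g(x) (x - w)⁻¹` is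
holomorphic on `ℂ \ F` and vanishes for `w ∉ X` (the new pole lies off `X`), and every
component of `ℂ \ F` leaves `X`, so by the identity principle it vanishes on all of `ℂ \ F`.
Hence `μ` represents `x` on rational functions with poles off `F`, and by uniform approximation
on `R(F)`. If `R(F) = C(F)`, `μ` would represent `x` on every continuous function, i.e.
`μ = δ_x`.
-/

open Metric MeasureTheory Set

noncomputable section

/-- Membership in the uniform algebra `R(X)`: `f` is continuous on `X` and is a uniform
limit on `X` of rational functions with no poles on `X`. -/
def RMem (X : Set ℂ) (f : ℂ → ℂ) : Prop :=
  ContinuousOn f X ∧ ∀ ε : ℝ, 0 < ε → ∃ p q : Polynomial ℂ,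
    (∀ z ∈ X, q.eval z ≠ 0) ∧ ∀ z ∈ X, ‖f z - p.eval z / q.eval z‖ < ε

/-- The ideal `M_x` of functions in `R(X)` vanishing at `x`. -/
def Mideal (X : Set ℂ) (x : ℂ) : Set (ℂ → ℂ) := {f | RMem X f ∧ f x = 0}

/-- The ideal `J_x` of functions in `R(X)` vanishing on a neighbourhood of `x` in `X`. -/
def Jideal (X : Set ℂ) (x : ℂ) : Set (ℂ → ℂ) :=
  {f | RMem X f ∧ ∃ U : Set ℂ, IsOpen U ∧ x ∈ U ∧ ∀ z ∈ X ∩ U, f z = 0}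

/-- `x` is a point of continuity for `R(X)`: for every `y ∈ X \ {x}`, `J_y ⊄ M_x`. -/
def PointOfContinuity (X : Set ℂ) (x : ℂ) : Prop :=
  ∀ y ∈ X, y ≠ x → ¬ (Jideal X y ⊆ Mideal X x)

/-- `x` is an R-point for `R(X)`: for every `y ∈ X \ {x}`, `J_x ⊄ M_y`. -/
def RPoint (X : Set ℂ) (x : ℂ) : Prop :=
  ∀ y ∈ X, y ≠ x → ¬ (Jideal X x ⊆ Mideal X y)

/-- A representing measure for `x` with respect to `R(X)`: a regular Borel probability
measure supported on `X` such that `f(x) = ∫ f dμ` for all `f ∈ R(X)`. -/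
def RepMeasure (X : Set ℂ) (x : ℂ) (μ : Measure ℂ) : Prop :=
  IsProbabilityMeasure μ ∧ μ.Regular ∧ μ Xᶜ = 0 ∧
    ∀ f : ℂ → ℂ, RMem X f → f x = ∫ z, f z ∂μ

/-- A Jensen measure for `x` with respect to `R(X)`: a representing measure satisfying
`log|f(x)| ≤ ∫ log|f| dμ` for all `f ∈ R(X)` (with `log 0 = -∞`).  When `f(x) = 0` the
inequality is vacuous; when `f(x) ≠ 0` the extended-real inequality is encoded by the
equivalent family of truncated inequalities with integrands `max (log|f|) c`, `c ∈ ℝ`. -/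
def JensenMeasure (X : Set ℂ) (x : ℂ) (μ : Measure ℂ) : Prop :=
  RepMeasure X x μ ∧ ∀ f : ℂ → ℂ, RMem X f → f x ≠ 0 →
    ∀ c : ℝ, Real.log ‖f x‖ ≤ ∫ z, max (Real.log ‖f z‖) c ∂μ

/-- The closed support of a measure on `ℂ`: the set of points all of whose open
neighbourhoods have nonzero measure. -/
def measSupportC (μ : Measure ℂ) : Set ℂ :=
  {y | ∀ U : Set ℂ, IsOpen U → y ∈ U → μ U ≠ 0}

open Topology

lemma measure_compl_eq_zero_of_measSupportC_subset {μ : Measure ℂ} {F : Set ℂ}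
    (h : measSupportC μ ⊆ F) : μ Fᶜ = 0 := by
  have hsupp : measSupportC μ = μ.support := by
    ext y
    simp only [measSupportC, Measure.support_eq_forall_isOpen, pos_iff_ne_zero, mem_ofPred_eq]
    exact forall_congr' fun U => Imp.swap
  exact mem_ae_iff.1 (Filter.mem_of_superset Measure.support_mem_ae (hsupp ▸ h))

lemma integrable_of_continuousOn_of_measure_compl_eq_zero {α E : Type*} [TopologicalSpace α]
    [T2Space α] [MeasurableSpace α] [OpensMeasurableSpace α] [NormedAddCommGroup E]
    {μ : Measure α} [IsFiniteMeasure μ] {K : Set α} {g : α → E} (hK : IsCompact K)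
    (hμK : μ Kᶜ = 0) (hg : ContinuousOn g K) : Integrable g μ := by
  rw [← Measure.restrict_eq_self_of_ae_mem (mem_ae_iff.2 hμK)]
  exact hg.integrableOn_compact hK

theorem differentiableOn_integral_mul_inv_sub {μ : Measure ℂ} {F : Set ℂ} {g : ℂ → ℂ}
    (hF : IsClosed F) (hμF : μ Fᶜ = 0) (hg : Integrable g μ) :
    DifferentiableOn ℂ (fun w => ∫ z, g z * (z - w)⁻¹ ∂μ) Fᶜ := by
  intro w₀ hw₀
  obtain ⟨r, hr, hball⟩ := Metric.isOpen_iff.1 hF.isOpen_compl w₀ hw₀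
  have hsep : ∀ᵐ z ∂μ, ∀ w ∈ ball w₀ (r / 2), r / 2 ≤ ‖z - w‖ := by
    filter_upwards [mem_ae_iff.2 hμF] with z hz w hw
    have hzr : r ≤ dist z w₀ := not_lt.1 fun h => hball (mem_ball.2 h) hz
    have := dist_triangle z w w₀
    rw [mem_ball] at hw
    rw [← dist_eq_norm]
    linarith
  have hderiv := hasDerivAt_integral_of_dominated_loc_of_deriv_le (μ := μ)
    (F := fun w z => g z * (z - w)⁻¹) (F' := fun w z => g z * ((z - w) ^ 2)⁻¹)
    (bound := fun z => ‖g z‖ * ((r / 2) ^ 2)⁻¹) (ball_mem_nhds w₀ (half_pos hr))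
    (Filter.Eventually.of_forall fun w => hg.aestronglyMeasurable.mul (by fun_prop))
    ?_ (hg.aestronglyMeasurable.mul (by fun_prop)) ?_ (hg.norm.mul_const _) ?_
  · exact hderiv.2.differentiableAt.differentiableWithinAt
  · refine hg.mul_bdd (c := (r / 2)⁻¹) (by fun_prop) ?_
    filter_upwards [hsep] with z hz
    rw [norm_inv]
    exact inv_anti₀ (half_pos hr) (hz w₀ (mem_ball_self (half_pos hr)))
  · filter_upwards [hsep] with z hz w hw
    rw [norm_mul, norm_inv, norm_pow]
    gcongr
    exact hz w hw
  · filter_upwards [hsep] with z hz w hw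
    have hzw : z - w ≠ 0 := norm_pos_iff.1 ((half_pos hr).trans_le (hz w hw))
    have h := (((hasDerivAt_id w).const_sub z).inv hzw).const_mul (g z)
    simpa only [id, Pi.inv_apply, neg_neg, one_div] using h

lemma exists_mem_connectedComponentIn_compl_notMem {X F : Set ℂ} (hX : Bornology.IsBounded X)
    (hcomp : ∀ z ∈ Fᶜ, Bornology.IsBounded (connectedComponentIn Fᶜ z) →
      ¬ connectedComponentIn Fᶜ z ⊆ X)
    {a : ℂ} (ha : a ∈ Fᶜ) : ∃ b ∈ connectedComponentIn Fᶜ a, b ∉ X := by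
  by_cases hbdd : Bornology.IsBounded (connectedComponentIn Fᶜ a)
  · exact not_subset.1 (hcomp a ha hbdd)
  · exact not_subset.1 fun h => hbdd (hX.subset h)

theorem eqOn_zero_of_forall_notMem_eq_zero {X F : Set ℂ} {H : ℂ → ℂ} (hX : IsCompact X)
    (hF : IsClosed F)
    (hcomp : ∀ z ∈ Fᶜ, Bornology.IsBounded (connectedComponentIn Fᶜ z) →
      ¬ connectedComponentIn Fᶜ z ⊆ X)
    (hH : DifferentiableOn ℂ H Fᶜ) (hH₀ : ∀ w ∈ Fᶜ, w ∉ X → H w = 0) :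
    EqOn H 0 Fᶜ := by
  intro a ha
  obtain ⟨b, hbU, hbX⟩ := exists_mem_connectedComponentIn_compl_notMem hX.isBounded hcomp ha
  have hUF : connectedComponentIn Fᶜ a ⊆ Fᶜ := connectedComponentIn_subset _ _
  have hHb : H =ᶠ[𝓝 b] 0 :=
    Filter.eventuallyEq_of_mem ((hF.isOpen_compl.inter hX.isClosed.isOpen_compl).mem_nhds
      ⟨hUF hbU, hbX⟩) fun w hw => hH₀ w hw.1 hw.2
  exact ((hH.analyticOnNhd hF.isOpen_compl).mono hUF).eqOn_zero_of_preconnected_of_eventuallyEq_zero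
    isPreconnected_connectedComponentIn hbU hHb (mem_connectedComponentIn ha)

lemma rMem_div {X : Set ℂ} {p q : Polynomial ℂ} (hq : ∀ z ∈ X, q.eval z ≠ 0) :
    RMem X (fun z => p.eval z / q.eval z) :=
  ⟨p.continuous.continuousOn.div q.continuous.continuousOn hq,
    fun _ hε => ⟨p, q, hq, fun _ _ => by simpa using hε⟩⟩

section RepresentingMeasure

variable {X F : Set ℂ} {x : ℂ} {μ : Measure ℂ}

theorem integral_div_mul_prod_sub_eq (hX : IsCompact X) (hFX : F ⊆ X) (hF : IsClosed F)
    (hx : x ∈ F)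
    (hcomp : ∀ z ∈ Fᶜ, Bornology.IsBounded (connectedComponentIn Fᶜ z) →
      ¬ connectedComponentIn Fᶜ z ⊆ X)
    (hrep : RepMeasure X x μ) (hμF : μ Fᶜ = 0) (p : Polynomial ℂ) (s : Multiset ℂ)
    (hs : ∀ a ∈ s, a ∉ F) (q : Polynomial ℂ) (hq : ∀ z ∈ X, q.eval z ≠ 0) :
    ∫ z, p.eval z / (q.eval z * (s.map (z - ·)).prod) ∂μ =
      p.eval x / (q.eval x * (s.map (x - ·)).prod) := by
  have : IsProbabilityMeasure μ := hrep.1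
  induction s using Multiset.induction_on generalizing q with
  | empty => simpa using (hrep.2.2.2 _ (rMem_div hq)).symm
  | cons a s ih =>
    have hsF : ∀ b ∈ s, b ∉ F := fun b hb => hs b (Multiset.mem_cons_of_mem hb)
    set g : ℂ → ℂ := fun z => p.eval z / (q.eval z * (s.map (z - ·)).prod)
    have hg : Integrable g μ := by
      refine integrable_of_continuousOn_of_measure_compl_eq_zero (hX.of_isClosed_subset hF hFX)
        hμF (ContinuousOn.div (by fun_prop) (by fun_prop) fun z hz => ?_)
      refine mul_ne_zero (hq z (hFX hz)) (Multiset.prod_ne_zero ?_)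
      simp only [Multiset.mem_map, not_exists, not_and]
      exact fun b hb h => hsF b hb (sub_eq_zero.1 h ▸ hz)
    have hg_mul : ∀ z b,
        g z * (z - b)⁻¹ = p.eval z / (q.eval z * ((z - b) * (s.map (z - ·)).prod)) := by
      intro z b
      simp only [g, div_eq_mul_inv, mul_inv]
      ring
    have hΦ : EqOn (fun w => ∫ z, g z * (z - w)⁻¹ ∂μ - g x * (x - w)⁻¹) 0 Fᶜ := by
      refine eqOn_zero_of_forall_notMem_eq_zero hX hF hcomp ?_ fun w _ hwX => ?_
      · refine (differentiableOn_integral_mul_inv_sub hF hμF hg).sub fun w hw => ?_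
        have hxw : x - w ≠ 0 := sub_ne_zero.2 fun h => hw (h ▸ hx)
        exact ((differentiableAt_const _).sub differentiableAt_id).inv hxw
          |>.const_mul (g x) |>.differentiableWithinAt
      · -- A pole `w ∉ X` can be absorbed into the factor `q` that has no zeros on `X`.
        have hqw : ∀ z ∈ X, (q * (Polynomial.X - Polynomial.C w)).eval z ≠ 0 := fun z hz => by
          simpa using ⟨hq z hz, sub_ne_zero.2 fun h => hwX (h ▸ hz)⟩
        simpa [hg_mul, sub_eq_zero, mul_assoc] using ih hsF _ hqw
    simpa [hg_mul, sub_eq_zero] using hΦ (hs a (Multiset.mem_cons_self a s))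

theorem integral_div_eq (hX : IsCompact X) (hFX : F ⊆ X) (hF : IsClosed F) (hx : x ∈ F)
    (hcomp : ∀ z ∈ Fᶜ, Bornology.IsBounded (connectedComponentIn Fᶜ z) →
      ¬ connectedComponentIn Fᶜ z ⊆ X)
    (hrep : RepMeasure X x μ) (hμF : μ Fᶜ = 0) (p q : Polynomial ℂ)
    (hq : ∀ z ∈ F, q.eval z ≠ 0) :
    ∫ z, p.eval z / q.eval z ∂μ = p.eval x / q.eval x := by
  have hq₀ : q ≠ 0 := fun h => hq x hx (by simp [h])
  have hfactor := Polynomial.C_leadingCoeff_mul_prod_multiset_X_sub_C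
    (IsAlgClosed.card_roots_eq_natDegree (p := q))
  have heval : ∀ z,
      q.eval z = (Polynomial.C q.leadingCoeff).eval z * (q.roots.map (z - ·)).prod := fun z => by
    conv_lhs => rw [← hfactor]
    simp [Polynomial.eval_multiset_prod]
  simp only [heval]
  refine integral_div_mul_prod_sub_eq hX hFX hF hx hcomp hrep hμF p _
    (fun a ha haF => hq a haF (Polynomial.isRoot_of_mem_roots ha)) (.C q.leadingCoeff) ?_
  simpa using fun _ _ => hq₀

end RepresentingMeasure

theorem eq_integral_of_rMem {K : Set ℂ} {x : ℂ} {μ : Measure ℂ} [IsProbabilityMeasure μ]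
    (hK : IsCompact K) (hμK : μ Kᶜ = 0) (hx : x ∈ K)
    (hrat : ∀ p q : Polynomial ℂ, (∀ z ∈ K, q.eval z ≠ 0) →
      ∫ z, p.eval z / q.eval z ∂μ = p.eval x / q.eval x)
    {f : ℂ → ℂ} (hf : RMem K f) : f x = ∫ z, f z ∂μ := by
  refine eq_of_forall_dist_le fun ε hε => ?_
  obtain ⟨p, q, hq, happrox⟩ := hf.2 (ε / 2) (half_pos hε)
  set r : ℂ → ℂ := fun z => p.eval z / q.eval z
  have hint : ∀ g : ℂ → ℂ, ContinuousOn g K → Integrable g μ := fun g =>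
    integrable_of_continuousOn_of_measure_compl_eq_zero hK hμK
  have hr : ∫ z, r z ∂μ = r x := hrat p q hq
  have hclose : ‖∫ z, (r z - f z) ∂μ‖ ≤ ε / 2 := by
    have hbound : ∀ᵐ z ∂μ, ‖r z - f z‖ ≤ ε / 2 := by
      filter_upwards [mem_ae_iff.2 hμK] with z hz
      rw [norm_sub_rev]
      exact (happrox z hz).le
    simpa using norm_integral_le_of_norm_le_const hbound
  calc dist (f x) (∫ z, f z ∂μ) = ‖(f x - r x) + ∫ z, (r z - f z) ∂μ‖ := by
        rw [dist_eq_norm, integral_sub (hint r (rMem_div hq).1) (hint f hf.1), hr]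
        congr 1
        ring
    _ ≤ ‖f x - r x‖ + ‖∫ z, (r z - f z) ∂μ‖ := norm_add_le _ _
    _ ≤ ε / 2 + ε / 2 := add_le_add (happrox x hx).le hclose
    _ = ε := add_halves ε

theorem eq_dirac_of_forall_continuous_eq_integral {Ω : Type*} [TopologicalSpace Ω]
    [MeasurableSpace Ω] [HasOuterApproxClosed Ω] [BorelSpace Ω] [MeasurableSingletonClass Ω]
    {μ : Measure Ω} [IsFiniteMeasure μ] {x : Ω}
    (h : ∀ g : Ω → ℂ, Continuous g → g x = ∫ z, g z ∂μ) : μ = Measure.dirac x := by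
  refine ext_of_forall_integral_eq_of_IsFiniteMeasure fun f => ?_
  have hf := h (fun z => (f z : ℂ)) (by fun_prop)
  rw [integral_complex_ofReal] at hf
  rw [integral_dirac]
  exact_mod_cast hf.symm

theorem representing_measure_on_subset_general (X : Set ℂ) (hXc : IsCompact X)
    (F : Set ℂ) (hFX : F ⊆ X) (hFcl : IsClosed F)
    (x : ℂ) (hx : x ∈ F)
    (hcomp : ∀ z ∈ Fᶜ, Bornology.IsBounded (connectedComponentIn Fᶜ z) →
      ¬ connectedComponentIn Fᶜ z ⊆ X)
    (μ : Measure ℂ) (hrep : RepMeasure X x μ) (hnt : μ ≠ Measure.dirac x)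
    (hsupp : measSupportC μ ⊆ F) :
    RepMeasure F x μ ∧ μ ≠ Measure.dirac x ∧
      ∃ g : ℂ → ℂ, ContinuousOn g F ∧ ¬ RMem F g := by
  have : IsProbabilityMeasure μ := hrep.1
  have hμF : μ Fᶜ = 0 := measure_compl_eq_zero_of_measSupportC_subset hsupp
  have hrepF : ∀ f : ℂ → ℂ, RMem F f → f x = ∫ z, f z ∂μ := fun f =>
    eq_integral_of_rMem (hXc.of_isClosed_subset hFcl hFX) hμF hx
      (integral_div_eq hXc hFX hFcl hx hcomp hrep hμF)
  refine ⟨⟨hrep.1, hrep.2.1, hμF, hrepF⟩, hnt, ?_⟩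
  by_contra! hRC
  exact hnt (eq_dirac_of_forall_continuous_eq_integral fun g hg => hrepF g (hRC g hg.continuousOn))

/-- Lemma 4.1 (paper, Lemma `lemma_4_1`): let `F` be a nonempty closed subset of a
compact plane set `X` with `x ∈ F`, such that no bounded component of `ℂ \ F` is
contained in `X`.  If `x` has a non-trivial representing measure `μ` with respect to
`R(X)` whose closed support is contained in `F`, then `μ` is also a non-trivial
representing measure for `x` with respect to `R(F)`, and `R(F) ≠ C(F)`. -/
theorem representing_measure_on_subset (X : Set ℂ) (hXc : IsCompact X)
    (hXne : X.Nonempty) (F : Set ℂ) (hFX : F ⊆ X) (hFcl : IsClosed F)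
    (hFne : F.Nonempty) (x : ℂ) (hx : x ∈ F)
    (hcomp : ∀ z ∈ Fᶜ, Bornology.IsBounded (connectedComponentIn Fᶜ z) →
      ¬ connectedComponentIn Fᶜ z ⊆ X)
    (μ : Measure ℂ) (hrep : RepMeasure X x μ) (hnt : μ ≠ Measure.dirac x)
    (hsupp : measSupportC μ ⊆ F) :
    RepMeasure F x μ ∧ μ ≠ Measure.dirac x ∧
      ∃ g : ℂ → ℂ, ContinuousOn g F ∧ ¬ RMem F g :=
  representing_measure_on_subset_general X hXc F hFX hFcl x hx hcomp μ hrep hnt hsupp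

end
end

section
/- Let X be a compact plane set and let F be a nonempty closed subset of X such that no bounded connected component of ℂ \ F is contained in X. Then the algebra of restrictions to F of functions in R(X) is dense in R(F) (with respect to the sup norm on F). -/
/-!
Runge's pole-pushing argument. Call `f` approximable (`RatApprox X F f`) if it is a uniform limit
on `F` of rational functions without poles on `X`; these functions form a subalgebra that is
closed under uniform limits on `F`. If `u` is approximable and `‖u‖ ≤ r < 1` on `F`, then so is
`(1 - u)⁻¹`, by its geometric series. Applied to `(z - a)⁻¹ = (z - b)⁻¹ (1 - (a - b) (z - b)⁻¹)⁻¹`,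
this shows that the set of poles `a ∉ F` for which `(z - a)⁻¹` is approximable is open and closed
in `ℂ \ F`, hence a union of components of `ℂ \ F`. Each component contains such a pole: a point
outside `X` if the component is bounded, and otherwise a point `w` so far from `F` that
`(z - w)⁻¹ = -w⁻¹ (1 - w⁻¹ z)⁻¹` is a uniform limit of polynomials. Factoring denominators then
makes every rational function without poles on `F`, hence every element of `R(F)`, approximable.
-/

open Metric MeasureTheory Set

noncomputable section

def RatApprox (X F : Set ℂ) (f : ℂ → ℂ) : Prop :=
  ∀ ε : ℝ, 0 < ε → ∃ p q : Polynomial ℂ, (∀ z ∈ X, q.eval z ≠ 0) ∧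
    ∀ z ∈ F, ‖f z - p.eval z / q.eval z‖ < ε

section RatApprox

variable {X F : Set ℂ} {f g : ℂ → ℂ}

theorem RatApprox.congr (hf : RatApprox X F f) (h : EqOn f g F) : RatApprox X F g := by
  intro ε hε
  obtain ⟨p, q, hq, hpq⟩ := hf ε hε
  exact ⟨p, q, hq, fun z hz => h hz ▸ hpq z hz⟩

theorem ratApprox_div (p q : Polynomial ℂ) (hq : ∀ z ∈ X, q.eval z ≠ 0) :
    RatApprox X F fun z => p.eval z / q.eval z :=
  fun ε hε => ⟨p, q, hq, fun z _ => by simpa using hε⟩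

theorem ratApprox_polynomial (p : Polynomial ℂ) : RatApprox X F fun z => p.eval z :=
  (ratApprox_div p 1 fun _ _ => by simp).congr fun z _ => by simp

theorem ratApprox_inv_sub_of_notMem {w : ℂ} (hw : w ∉ X) : RatApprox X F fun z => (z - w)⁻¹ :=
  (ratApprox_div 1 (Polynomial.X - Polynomial.C w) fun z hz => by
    simpa [sub_eq_zero] using ne_of_mem_of_not_mem hz hw).congr fun z _ => by simp

theorem RatApprox.of_forall_approx
    (h : ∀ ε : ℝ, 0 < ε → ∃ g, RatApprox X F g ∧ ∀ z ∈ F, ‖f z - g z‖ < ε) :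
    RatApprox X F f := by
  intro ε hε
  obtain ⟨g, hg, hfg⟩ := h (ε / 2) (half_pos hε)
  obtain ⟨p, q, hq, hgpq⟩ := hg (ε / 2) (half_pos hε)
  refine ⟨p, q, hq, fun z hz => ?_⟩
  calc ‖f z - p.eval z / q.eval z‖ ≤ ‖f z - g z‖ + ‖g z - p.eval z / q.eval z‖ :=
        norm_sub_le_norm_sub_add_norm_sub _ _ _
    _ < ε / 2 + ε / 2 := add_lt_add (hfg z hz) (hgpq z hz)
    _ = ε := add_halves ε

theorem RatApprox.add (hFX : F ⊆ X) (hf : RatApprox X F f) (hg : RatApprox X F g) :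
    RatApprox X F (f + g) := by
  refine .of_forall_approx fun ε hε => ?_
  obtain ⟨p₁, q₁, hq₁, h₁⟩ := hf (ε / 2) (half_pos hε)
  obtain ⟨p₂, q₂, hq₂, h₂⟩ := hg (ε / 2) (half_pos hε)
  have hsum : RatApprox X F fun z => p₁.eval z / q₁.eval z + p₂.eval z / q₂.eval z :=
    (ratApprox_div (p₁ * q₂ + q₁ * p₂) (q₁ * q₂) fun z hz => by
      simp [hq₁ z hz, hq₂ z hz]).congr fun z hz => by
        simp [div_add_div _ _ (hq₁ z (hFX hz)) (hq₂ z (hFX hz))]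
  refine ⟨_, hsum, fun z hz => ?_⟩
  calc ‖(f + g) z - (p₁.eval z / q₁.eval z + p₂.eval z / q₂.eval z)‖
        = ‖(f z - p₁.eval z / q₁.eval z) + (g z - p₂.eval z / q₂.eval z)‖ := by
          rw [Pi.add_apply, add_sub_add_comm]
    _ < ε / 2 + ε / 2 := (norm_add_le _ _).trans_lt (add_lt_add (h₁ z hz) (h₂ z hz))
    _ = ε := add_halves ε

theorem RatApprox.exists_bound (hF : IsCompact F) (hFX : F ⊆ X) (hf : RatApprox X F f) :
    ∃ M, 0 ≤ M ∧ ∀ z ∈ F, ‖f z‖ ≤ M := by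
  obtain ⟨p, q, hq, hpq⟩ := hf 1 one_pos
  obtain ⟨C, hC⟩ := hF.exists_bound_of_continuousOn
    (p.continuous.continuousOn.div q.continuous.continuousOn fun z hz => hq z (hFX hz))
  refine ⟨max (C + 1) 0, le_max_right _ _, fun z hz => le_max_of_le_left ?_⟩
  calc ‖f z‖ ≤ ‖p.eval z / q.eval z‖ + ‖f z - p.eval z / q.eval z‖ := norm_le_insert' _ _
    _ ≤ C + 1 := add_le_add (hC z hz) (hpq z hz).le

theorem RatApprox.mul (hF : IsCompact F) (hFX : F ⊆ X) (hf : RatApprox X F f)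
    (hg : RatApprox X F g) : RatApprox X F (f * g) := by
  obtain ⟨M, hM₀, hM⟩ := hf.exists_bound hF hFX
  obtain ⟨N, -, hN⟩ := hg.exists_bound hF hFX
  refine .of_forall_approx fun ε hε => ?_
  obtain ⟨δ, hδ, hδε⟩ := exists_pos_mul_lt hε (M + N + 1)
  obtain ⟨p₁, q₁, hq₁, h₁⟩ := hf (min δ 1) (lt_min hδ one_pos)
  obtain ⟨p₂, q₂, hq₂, h₂⟩ := hg (min δ 1) (lt_min hδ one_pos)
  have hprod : RatApprox X F fun z => p₁.eval z / q₁.eval z * (p₂.eval z / q₂.eval z) :=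
    (ratApprox_div (p₁ * p₂) (q₁ * q₂) fun z hz => by
      simp [hq₁ z hz, hq₂ z hz]).congr fun z _ => by simp [div_mul_div_comm]
  refine ⟨_, hprod, fun z hz => ?_⟩
  set r₁ := p₁.eval z / q₁.eval z
  set r₂ := p₂.eval z / q₂.eval z
  have e₁ : ‖f z - r₁‖ ≤ δ := (h₁ z hz).le.trans (min_le_left _ _)
  have e₂ : ‖g z - r₂‖ ≤ δ := (h₂ z hz).le.trans (min_le_left _ _)
  have hr₂ : ‖r₂‖ ≤ N + 1 := by
    calc ‖r₂‖ ≤ ‖g z‖ + ‖r₂ - g z‖ := norm_le_insert' _ _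
      _ ≤ N + 1 := by
        rw [norm_sub_rev]
        exact add_le_add (hN z hz) ((h₂ z hz).le.trans (min_le_right _ _))
  calc ‖(f * g) z - r₁ * r₂‖ = ‖f z * (g z - r₂) + r₂ * (f z - r₁)‖ := by
        rw [Pi.mul_apply]; ring_nf
    _ ≤ M * δ + (N + 1) * δ := by
        refine (norm_add_le _ _).trans ?_
        rw [norm_mul, norm_mul]
        gcongr
        · exact hM z hz
        · exact (norm_nonneg _).trans hr₂
    _ = (M + N + 1) * δ := by ring
    _ < ε := hδε

def ratApproxSubalgebra (hF : IsCompact F) (hFX : F ⊆ X) : Subalgebra ℂ (ℂ → ℂ) where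
  carrier := {f | RatApprox X F f}
  mul_mem' hf hg := hf.mul hF hFX hg
  add_mem' hf hg := hf.add hFX hg
  algebraMap_mem' c := (ratApprox_polynomial (Polynomial.C c)).congr fun z _ => by simp

end RatApprox

open scoped Topology

section Runge

variable {X F : Set ℂ} {u : ℂ → ℂ}

theorem RatApprox.inv_one_sub (hF : IsCompact F) (hFX : F ⊆ X) (hu : RatApprox X F u) {r : ℝ}
    (hr : r < 1) (hur : ∀ z ∈ F, ‖u z‖ ≤ r) : RatApprox X F fun z => (1 - u z)⁻¹ := by
  refine .of_forall_approx fun ε hε => ?_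
  obtain ⟨N, hN⟩ := exists_pow_lt_of_lt_one (mul_pos hε (sub_pos.2 hr)) hr
  have hsum : RatApprox X F (∑ k ∈ Finset.range N, u ^ k) :=
    Subalgebra.sum_mem _ fun k _ => Subalgebra.pow_mem (ratApproxSubalgebra hF hFX) hu k
  refine ⟨_, hsum, fun z hz => ?_⟩
  have hgap : 1 - r ≤ ‖1 - u z‖ := by
    have := norm_sub_norm_le (1 : ℂ) (u z)
    rw [norm_one] at this
    linarith [hur z hz]
  have hne : 1 - u z ≠ 0 := norm_pos_iff.1 ((sub_pos.2 hr).trans_le hgap)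
  have hgeom : (1 - u z)⁻¹ - (∑ k ∈ Finset.range N, u ^ k) z = u z ^ N * (1 - u z)⁻¹ := by
    have hS : (∑ k ∈ Finset.range N, u ^ k) z = (1 - u z ^ N) * (1 - u z)⁻¹ := by
      simp only [Finset.sum_apply, Pi.pow_apply]
      rw [← geom_sum_mul_neg, mul_inv_cancel_right₀ hne]
    rw [hS]
    ring
  rw [hgeom, norm_mul, norm_pow, norm_inv, ← div_eq_mul_inv,
    div_lt_iff₀ ((sub_pos.2 hr).trans_le hgap)]
  calc ‖u z‖ ^ N ≤ r ^ N := pow_le_pow_left₀ (norm_nonneg _) (hur z hz) N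
    _ < ε * (1 - r) := hN
    _ ≤ ε * ‖1 - u z‖ := by gcongr

theorem RatApprox.inv_sub_of_norm_sub_lt (hF : IsCompact F) (hFX : F ⊆ X) {a b : ℂ} {d : ℝ}
    (hb : RatApprox X F fun z => (z - b)⁻¹) (hd : ∀ z ∈ F, d ≤ ‖z - b‖) (hab : ‖a - b‖ < d) :
    RatApprox X F fun z => (z - a)⁻¹ := by
  have hd₀ : 0 < d := (norm_nonneg _).trans_lt hab
  have hu : RatApprox X F fun z => (a - b) * (z - b)⁻¹ :=
    (ratApproxSubalgebra hF hFX).mul_mem ((ratApprox_polynomial (Polynomial.C (a - b))).congr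
      fun z _ => by simp) hb
  have hu_le : ∀ z ∈ F, ‖(a - b) * (z - b)⁻¹‖ ≤ ‖a - b‖ / d := fun z hz => by
    rw [norm_mul, norm_inv, ← div_eq_mul_inv]
    exact div_le_div_of_nonneg_left (norm_nonneg _) hd₀ (hd z hz)
  refine (hb.mul hF hFX (hu.inv_one_sub hF hFX ((div_lt_one hd₀).2 hab) hu_le)).congr
    fun z hz => ?_
  have hzb : z - b ≠ 0 := norm_pos_iff.1 (hd₀.trans_le (hd z hz))
  simp only [Pi.mul_apply, ← mul_inv]
  congr 1
  field_simp
  ring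

theorem ratApprox_inv_sub_of_subset_closedBall (hF : IsCompact F) (hFX : F ⊆ X) {M : ℝ}
    (hM₀ : 0 ≤ M) (hFM : F ⊆ closedBall 0 M) {w : ℂ} (hw : M < ‖w‖) :
    RatApprox X F fun z => (z - w)⁻¹ := by
  have hw₀ : w ≠ 0 := norm_pos_iff.1 (hM₀.trans_lt hw)
  have hu : RatApprox X F fun z => w⁻¹ * z :=
    (ratApprox_polynomial (Polynomial.C w⁻¹ * Polynomial.X)).congr fun z _ => by simp
  have hu_le : ∀ z ∈ F, ‖w⁻¹ * z‖ ≤ M / ‖w‖ := fun z hz => by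
    rw [norm_mul, norm_inv, inv_mul_eq_div]
    gcongr
    simpa using hFM hz
  have hneg : RatApprox X F fun _ => -w⁻¹ :=
    (ratApprox_polynomial (Polynomial.C (-w⁻¹))).congr fun z _ => by simp
  refine ((ratApproxSubalgebra hF hFX).mul_mem hneg
    (hu.inv_one_sub hF hFX ((div_lt_one (hM₀.trans_lt hw)).2 hw) hu_le)).congr fun z _ => ?_
  simp only [Pi.mul_apply, neg_mul, ← mul_inv]
  rw [← inv_neg]
  congr 1
  field_simp
  ring

theorem eventually_ratApprox_inv_sub_iff (hF : IsCompact F) (hFX : F ⊆ X) {b : ℂ}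
    (hb : b ∉ F) :
    ∀ᶠ a in 𝓝 b, (RatApprox X F fun z => (z - b)⁻¹) ↔ RatApprox X F fun z => (z - a)⁻¹ := by
  obtain ⟨ρ, hρ, hball⟩ := Metric.isOpen_iff.1 hF.isClosed.isOpen_compl b hb
  have hfar : ∀ z ∈ F, ρ ≤ ‖z - b‖ := fun z hz => by
    rw [← dist_eq_norm]
    exact not_lt.1 fun h => hball h hz
  filter_upwards [ball_mem_nhds b (half_pos hρ)] with a ha
  rw [mem_ball, dist_eq_norm] at ha
  refine ⟨fun h => h.inv_sub_of_norm_sub_lt hF hFX hfar (ha.trans (half_lt_self hρ)),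
    fun h => h.inv_sub_of_norm_sub_lt hF hFX (d := ρ / 2) (fun z hz => ?_) (by rwa [norm_sub_rev])⟩
  linarith [hfar z hz, norm_sub_le_norm_sub_add_norm_sub z a b]

theorem RatApprox.inv_sub_of_mem_connectedComponentIn (hF : IsCompact F) (hFX : F ⊆ X)
    {a w : ℂ} (ha : a ∉ F) (hw : w ∈ connectedComponentIn Fᶜ a)
    (hwF : RatApprox X F fun z => (z - w)⁻¹) : RatApprox X F fun z => (z - a)⁻¹ :=
  (isPreconnected_connectedComponentIn.induction₂
    (fun b c => (RatApprox X F fun z => (z - b)⁻¹) ↔ RatApprox X F fun z => (z - c)⁻¹)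
    (fun _ hb => nhdsWithin_le_nhds
      (eventually_ratApprox_inv_sub_iff hF hFX (connectedComponentIn_subset _ _ hb)))
    (fun _ _ _ _ _ _ => Iff.trans) (fun _ _ _ _ => Iff.symm)
    (mem_connectedComponentIn ha) hw).2 hwF

theorem ratApprox_inv_sub_of_components (hF : IsCompact F) (hFX : F ⊆ X)
    (hcomp : ∀ z ∈ Fᶜ, Bornology.IsBounded (connectedComponentIn Fᶜ z) →
      ¬ connectedComponentIn Fᶜ z ⊆ X)
    {a : ℂ} (ha : a ∉ F) : RatApprox X F fun z => (z - a)⁻¹ := by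
  by_cases hC : Bornology.IsBounded (connectedComponentIn Fᶜ a)
  · obtain ⟨w, hwC, hwX⟩ := not_subset.1 (hcomp a ha hC)
    exact RatApprox.inv_sub_of_mem_connectedComponentIn hF hFX ha hwC
      (ratApprox_inv_sub_of_notMem hwX)
  · obtain ⟨M, hM₀, hFM⟩ := hF.isBounded.subset_closedBall_lt 0 0
    obtain ⟨w, hwC, hwM⟩ : ∃ w ∈ connectedComponentIn Fᶜ a, M < ‖w‖ := by
      rw [isBounded_iff_forall_norm_le] at hC
      simpa using not_forall.1 (not_exists.1 hC M)
    exact RatApprox.inv_sub_of_mem_connectedComponentIn hF hFX ha hwC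
      (ratApprox_inv_sub_of_subset_closedBall hF hFX hM₀.le hFM hwM)

theorem ratApprox_div_of_forall_inv_sub (hF : IsCompact F) (hFX : F ⊆ X)
    (hinv : ∀ a ∉ F, RatApprox X F fun z => (z - a)⁻¹) (p q : Polynomial ℂ)
    (hq : ∀ z ∈ F, q.eval z ≠ 0) : RatApprox X F fun z => p.eval z / q.eval z := by
  have hroots : (q.roots.map fun r (z : ℂ) => (z - r)⁻¹).prod ∈ ratApproxSubalgebra hF hFX :=
    Subalgebra.multiset_prod_mem _ fun f hf => by
      obtain ⟨r, hr, rfl⟩ := Multiset.mem_map.1 hf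
      exact hinv r fun hrF => hq r hrF (Polynomial.isRoot_of_mem_roots hr)
  refine ((ratApproxSubalgebra hF hFX).mul_mem
    (ratApprox_polynomial (p * Polynomial.C q.leadingCoeff⁻¹)) hroots).congr fun z _ => ?_
  rw [Pi.mul_apply, Pi.multiset_prod_apply, Multiset.map_map,
    (IsAlgClosed.splits q).eval_eq_prod_roots z]
  simp only [Function.comp_def, Polynomial.eval_mul, Polynomial.eval_C, Multiset.prod_map_inv]
  ring

end Runge

theorem restrictions_dense_general (X : Set ℂ) (hXc : IsCompact X)
    (F : Set ℂ) (hFX : F ⊆ X) (hFcl : IsClosed F)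
    (hcomp : ∀ z ∈ Fᶜ, Bornology.IsBounded (connectedComponentIn Fᶜ z) →
      ¬ connectedComponentIn Fᶜ z ⊆ X) :
    ∀ g : ℂ → ℂ, RMem F g → ∀ ε : ℝ, 0 < ε →
      ∃ f : ℂ → ℂ, RMem X f ∧ ∀ z ∈ F, ‖g z - f z‖ < ε := by
  intro g hg ε hε
  have hF : IsCompact F := hXc.of_isClosed_subset hFcl hFX
  have hgF : RatApprox X F g := .of_forall_approx fun δ hδ => by
    obtain ⟨p, q, hq, hpq⟩ := hg.2 δ hδ
    exact ⟨_, ratApprox_div_of_forall_inv_sub hF hFX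
      (fun a ha => ratApprox_inv_sub_of_components hF hFX hcomp ha) p q hq, hpq⟩
  obtain ⟨P, Q, hQ, hPQ⟩ := hgF ε hε
  exact ⟨_, ⟨P.continuous.continuousOn.div Q.continuous.continuousOn hQ, ratApprox_div P Q hQ⟩,
    hPQ⟩

/-- (Consequence of Runge's theorem, used in Lemma 4.1 of the paper.)  If `F` is a
nonempty closed subset of a compact plane set `X` such that no bounded component of
`ℂ \ F` is contained in `X`, then the restrictions to `F` of functions in `R(X)` are
uniformly dense in `R(F)`. -/
theorem restrictions_dense (X : Set ℂ) (hXc : IsCompact X) (hXne : X.Nonempty)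
    (F : Set ℂ) (hFX : F ⊆ X) (hFcl : IsClosed F) (hFne : F.Nonempty)
    (hcomp : ∀ z ∈ Fᶜ, Bornology.IsBounded (connectedComponentIn Fᶜ z) →
      ¬ connectedComponentIn Fᶜ z ⊆ X) :
    ∀ g : ℂ → ℂ, RMem F g → ∀ ε : ℝ, 0 < ε →
      ∃ f : ℂ → ℂ, RMem X f ∧ ∀ z ∈ F, ‖g z - f z‖ < ε :=
  restrictions_dense_general X hXc F hFX hFcl hcomp

end
end

section
/- Let d > 0 and M > 0, and let (a_k)_{k≥1} be a sequence of positive real numbers such that a_k ≤ k! · (1/d^{k+1} + (log(k+3))^k) · M for all k ≥ 1. Then ∑_{k=1}^∞ a_k^{−1/k} = ∞. -/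
/-!
Since `k! ≤ k ^ k`, the hypothesis gives `a_k ≤ (B k log (k + 3)) ^ k` for a constant `B`
depending only on `d` and `M`, so `a_k ^ (-1/k) ≥ (B k log (k + 3))⁻¹`. The series
`∑ (k log k)⁻¹` diverges by Cauchy condensation, which turns it into a multiple of the
harmonic series.
-/

open Real

lemma one_le_log_of_three_le {x : ℝ} (hx : 3 ≤ x) : 1 ≤ log x := by
  rw [le_log_iff_exp_le (by linarith)]
  exact exp_one_lt_three.le.trans hx

lemma not_summable_natCast_mul_log_inv : ¬Summable fun n : ℕ => ((n : ℝ) * log n)⁻¹ := by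
  have h_nonneg : 0 ≤ᶠ[Filter.atTop] fun n : ℕ => ((n : ℝ) * log n)⁻¹ :=
    Filter.Eventually.of_forall fun n => by positivity
  have h_anti : ∀ᶠ n : ℕ in Filter.atTop,
      ((n + 1 : ℕ) * log (n + 1 : ℕ) : ℝ)⁻¹ ≤ ((n : ℝ) * log n)⁻¹ := by
    filter_upwards [Filter.eventually_ge_atTop 2] with n hn
    have hn' : (2 : ℝ) ≤ n := by exact_mod_cast hn
    have hlog : 0 < log (n : ℝ) := log_pos (by linarith)
    gcongr <;> linarith
  rw [← summable_condensed_iff_of_eventually_nonneg h_nonneg h_anti]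
  have h_condensed (k : ℕ) :
      (2 : ℝ) ^ k * (((2 ^ k : ℕ) : ℝ) * log ((2 ^ k : ℕ) : ℝ))⁻¹ = (log 2)⁻¹ * (k : ℝ)⁻¹ := by
    push_cast
    rw [log_pow, mul_inv, ← mul_assoc, mul_inv_cancel₀ (by positivity), one_mul, mul_inv, mul_comm]
  simp_rw [h_condensed, summable_mul_left_iff (inv_ne_zero (log_pos one_lt_two).ne')]
  exact not_summable_natCast_inv

lemma inv_le_rpow_neg_one_div {a x : ℝ} {n : ℕ} (ha : 0 < a) (hx : 0 < x) (hn : n ≠ 0)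
    (h : a ≤ x ^ n) : x⁻¹ ≤ a ^ (-1 / (n : ℝ)) := by
  rw [neg_div, rpow_neg ha.le, one_div]
  apply inv_anti₀ (by positivity)
  calc a ^ (n⁻¹ : ℝ) ≤ (x ^ n) ^ (n⁻¹ : ℝ) := by gcongr
    _ = x := pow_rpow_inv_natCast hx.le hn

lemma exists_factorial_mul_inv_pow_add_pow_mul_le {d M : ℝ} (hd : 0 < d) (hM : 0 ≤ M) :
    ∃ B > 0, ∀ k : ℕ, k ≠ 0 → ∀ L : ℝ, 1 ≤ L →
      (k.factorial : ℝ) * (1 / d ^ (k + 1) + L ^ k) * M ≤ (B * k * L) ^ k := by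
  set c := max 1 d⁻¹
  have hc : 1 ≤ c := le_max_left _ _
  set A := max 1 (2 * c * M)
  have hA : 1 ≤ A := le_max_left _ _
  refine ⟨A * c, by positivity, fun k hk L hL => ?_⟩
  have hcL : c ≤ c * L := le_mul_of_one_le_right (by positivity) hL
  have hsum : 1 / d ^ (k + 1) + L ^ k ≤ 2 * c * (c * L) ^ k := by
    have h1 : 1 / d ^ (k + 1) ≤ c * (c * L) ^ k := by
      rw [one_div, ← inv_pow, pow_succ']
      gcongr
      · exact le_max_right _ _
      · exact (le_max_right _ _).trans hcL
    have h2 : L ^ k ≤ c * (c * L) ^ k :=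
      calc L ^ k ≤ (c * L) ^ k := by gcongr; exact le_mul_of_one_le_left (by positivity) hc
        _ ≤ c * (c * L) ^ k := le_mul_of_one_le_left (by positivity) hc
    linarith
  calc (k.factorial : ℝ) * (1 / d ^ (k + 1) + L ^ k) * M
      ≤ (k : ℝ) ^ k * (2 * c * (c * L) ^ k) * M := by
        gcongr
        exact_mod_cast Nat.factorial_le_pow k
    _ = 2 * c * M * (c * k * L) ^ k := by ring
    _ ≤ A ^ k * (c * k * L) ^ k := by
        gcongr
        exact (le_max_right _ _).trans (le_self_pow₀ hA hk)
    _ = (A * c * k * L) ^ k := by ring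

lemma ENNReal.tsum_ofReal_eq_top_of_not_summable {ι : Type*} {f : ι → ℝ} (hf : ∀ i, 0 ≤ f i)
    (h : ¬Summable f) : ∑' i, ENNReal.ofReal (f i) = ⊤ := by
  by_contra hne
  exact h ((ENNReal.summable_toReal hne).congr fun i => ENNReal.toReal_ofReal (hf i))

/-- (The series estimate from the proof of Theorem 4.6 of the paper.)  If
`a_k ≤ k! ⬝ (1/d^{k+1} + (log(k+3))^k) ⬝ M` for all `k ≥ 1`, with `a_k, d, M > 0`, then
`∑_{k≥1} a_k^{-1/k} = ∞` (the sum taken in `[0, ∞]`). -/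
theorem sum_inv_root_diverges (d M : ℝ) (hd : 0 < d) (hM : 0 < M)
    (a : ℕ → ℝ) (hpos : ∀ k : ℕ, 1 ≤ k → 0 < a k)
    (hbound : ∀ k : ℕ, 1 ≤ k →
      a k ≤ (k.factorial : ℝ) * (1 / d ^ (k + 1) + Real.log ((k : ℝ) + 3) ^ k) * M) :
    ∑' k : ℕ, ENNReal.ofReal ((a (k + 1)) ^ (-(1 : ℝ) / ((k : ℝ) + 1))) = ⊤ := by
  obtain ⟨B, hB, hbnd⟩ := exists_factorial_mul_inv_pow_add_pow_mul_le hd hM.le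
  have hterm (k : ℕ) :
      B⁻¹ * (((k + 4 : ℕ) : ℝ) * log (k + 4 : ℕ))⁻¹ ≤ a (k + 1) ^ (-(1 : ℝ) / ((k : ℝ) + 1)) := by
    have hL : 1 ≤ log (((k + 1 : ℕ) : ℝ) + 3) :=
      one_le_log_of_three_le (le_add_of_nonneg_left (Nat.cast_nonneg _))
    have hroot := inv_le_rpow_neg_one_div (hpos _ k.succ_pos) (by positivity) k.succ_ne_zero
      ((hbound _ k.succ_pos).trans (hbnd _ k.succ_ne_zero _ hL))
    have hk : ((k + 1 : ℕ) : ℝ) + 3 = (k + 4 : ℕ) := by push_cast; ring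
    rw [hk] at hroot hL
    calc B⁻¹ * (((k + 4 : ℕ) : ℝ) * log (k + 4 : ℕ))⁻¹
        = (B * (k + 4 : ℕ) * log (k + 4 : ℕ))⁻¹ := by rw [mul_assoc, mul_inv B]
      _ ≤ (B * (k + 1 : ℕ) * log (k + 4 : ℕ))⁻¹ := by
          have hlog : 0 < log ((k + 4 : ℕ) : ℝ) := by linarith
          gcongr
          omega
      _ ≤ _ := by simpa using hroot
  have hdiv : ¬Summable fun k : ℕ => B⁻¹ * (((k + 4 : ℕ) : ℝ) * log (k + 4 : ℕ))⁻¹ := by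
    rw [summable_mul_left_iff (inv_ne_zero hB.ne')]
    exact fun h => not_summable_natCast_mul_log_inv ((summable_nat_add_iff 4).mp h)
  exact eq_top_mono (ENNReal.tsum_le_tsum fun k => ENNReal.ofReal_le_ofReal (hterm k))
    (ENNReal.tsum_ofReal_eq_top_of_not_summable (fun k => by positivity) hdiv)
end
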